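/- arXiv:2602.13929 — 3 statements merged into one kernel-verified Lean document; each statement's English description precedes it below -/
import Mathlib

section
/- Let g be a finite-dimensional real Lie algebra equipped with an inner product ⟨·,·⟩; for u ∈ g let ad_u : g → g denote v ↦ ⁅u,v⁆ and ad*_u its adjoint with respect to ⟨·,·⟩. Let X ∈ g satisfy ad*_X = −ad_X, let Φ(t) := exp(t·ad_X), let V : ℝ → g be differentiable, and define U(t) := X + Φ(t)(V(t)). Then U is constant in t (U'(t) = 0 for all t) if and only if V'(t) = ad*_X V(t) for all t ∈ ℝ. -/
open scoped RealInnerProductSpace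

variable {g : Type*} [NormedAddCommGroup g] [InnerProductSpace ℝ g] [FiniteDimensional ℝ g]

/-- The adjoint operator `ad_u : v ↦ ⁅u, v⁆` of a Lie bracket `br`, as a
continuous linear map on the finite-dimensional space `g`. -/
noncomputable def adOp (br : g →ₗ[ℝ] g →ₗ[ℝ] g) (u : g) : g →L[ℝ] g :=
  LinearMap.toContinuousLinearMap (br u)

/-- The coadjoint operator `ad*_u`, the adjoint of `ad_u` with respect to the
inner product. -/
noncomputable def adStarOp (br : g →ₗ[ℝ] g →ₗ[ℝ] g) (u : g) : g →L[ℝ] g :=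
  ContinuousLinearMap.adjoint (adOp br u)

/-- The operator exponential `Φ(t) = exp(t ad_X)`. -/
noncomputable def phiExp (br : g →ₗ[ℝ] g →ₗ[ℝ] g) (X : g) (t : ℝ) : g →L[ℝ] g :=
  NormedSpace.exp (t • adOp br X)

/-!
Since `d/dt exp(tA) = exp(tA) A`, the curve `W(t) = exp(tA) V(t)` has derivative
`exp(tA) (A V + V')`, which vanishes when `V' = -A V`. Conversely, if `W` is constant then
`V(t) = exp(-tA) W(t)`, and as `exp(-tA)` commutes with `A` its derivative is `-A V`.
Take `A = ad_X`, so that `-A = ad*_X`.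
-/

open NormedSpace

section ExpFlow

variable {E : Type*} [NormedAddCommGroup E] [NormedSpace ℝ E] [CompleteSpace E]
  (A : E →L[ℝ] E)

theorem exp_smul_neg_apply_exp_smul_apply (t : ℝ) (v : E) :
    exp (t • -A) (exp (t • A) v) = v := by
  let +nondep : NormedAlgebra ℚ (E →L[ℝ] E) := .restrictScalars ℚ ℝ _
  rw [← mul_apply_eq_comp, smul_neg,
    ← exp_add_of_commute (Commute.refl (t • A)).neg_left, neg_add_cancel, exp_zero,
    one_apply_eq_self]

theorem hasDerivAt_exp_smul_apply {V : ℝ → E} {V' : E} {t : ℝ} (hV : HasDerivAt V V' t) :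
    HasDerivAt (fun s => exp (s • A) (V s)) (exp (t • A) (A (V t) + V')) t := by
  simpa only [map_add, mul_apply_eq_comp] using
    (hasDerivAt_exp_smul_const A t).clm_apply hV

theorem hasDerivAt_exp_smul_apply_zero_iff (V : ℝ → E) :
    (∀ t, HasDerivAt (fun s => exp (s • A) (V s)) 0 t) ↔
      ∀ t, HasDerivAt V (-A (V t)) t := by
  constructor
  · intro hW t
    have hV : V = fun s => exp (s • -A) (exp (s • A) (V s)) :=
      funext fun s => (exp_smul_neg_apply_exp_smul_apply A s (V s)).symm
    have hcomm : Commute (exp (t • -A)) (-A) := ((Commute.refl (-A)).smul_left t).exp_left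
    have h := hasDerivAt_exp_smul_apply (-A) (hW t)
    rw [← hV, add_zero, ← mul_apply_eq_comp, hcomm.eq, mul_apply_eq_comp,
      exp_smul_neg_apply_exp_smul_apply] at h
    simpa only [neg_apply] using h
  · intro hV t
    simpa only [add_neg_cancel, map_zero] using hasDerivAt_exp_smul_apply A (hV t)

end ExpFlow

theorem statement12_general (br : g →ₗ[ℝ] g →ₗ[ℝ] g)
    (X : g) (hX : adStarOp br X = -adOp br X)
    (V : ℝ → g) :
    (∀ t : ℝ, HasDerivAt (fun s : ℝ => X + phiExp br X s (V s)) 0 t)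
      ↔ (∀ t : ℝ, HasDerivAt V (adStarOp br X (V t)) t) := by
  simp_rw [hasDerivAt_const_add_iff, hX, neg_apply]
  exact hasDerivAt_exp_smul_apply_zero_iff (adOp br X) V

/-- The stationarity criterion in Theorem 5.1, in the
finite-dimensional real Lie algebra setting (the Lie algebra is a
finite-dimensional real inner product space `g` with an antisymmetric bilinear
bracket `br` satisfying the Jacobi identity). With `ad*_X = -ad_X` and
`U(t) = X + exp(t ad_X)(V(t))`, the curve `U` is constant in `t`
(`U'(t) = 0` for all `t`) if and only if `V'(t) = ad*_X V(t)` for all `t`. -/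
theorem statement12 (br : g →ₗ[ℝ] g →ₗ[ℝ] g)
    (hanti : ∀ x y : g, br x y = -br y x)
    (hjacobi : ∀ x y z : g, br (br x y) z + br (br y z) x + br (br z x) y = 0)
    (X : g) (hX : adStarOp br X = -adOp br X)
    (V : ℝ → g) (hV : Differentiable ℝ V) :
    (∀ t : ℝ, HasDerivAt (fun s : ℝ => X + phiExp br X s (V s)) 0 t)
      ↔ (∀ t : ℝ, HasDerivAt V (adStarOp br X (V t)) t) :=
  statement12_general br X hX V
end

section
/- Let g be a finite-dimensional real Lie algebra equipped with an inner product ⟨·,·⟩; for u ∈ g let ad_u : g → g denote v ↦ ⁅u,v⁆ and ad*_u its adjoint with respect to ⟨·,·⟩. Let X ∈ g satisfy ad*_X = −ad_X and let Φ(t) := exp(t·ad_X). Suppose v, w ∈ g and λ, σ, ρ ∈ ℝ satisfy ad*_v X = λ·w, ad*_w X = −λ·v, ad*_v v = 0, ad*_w w = 0, and ad*_v w + ad*_w v = 0. Then the curve U(t) := X + ρ·Φ(t)(cos(σ+λt)·v − sin(σ+λt)·w) satisfies the Euler–Arnold equation U'(t) = −ad*_{U(t)} U(t) for all t ∈ ℝ.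 -/
/-!
`Φ(t) = exp (t • ad_X)` is a Lie algebra automorphism (Jacobi makes `ad_X` a derivation) and is
orthogonal (`ad_X` is skew-adjoint); hence `ad*_{Φ z} (Φ y) = Φ (ad*_z y)`, and `Φ` fixes `X`.
For `U = X + ρ Φ z` this gives `ad*_U U = -ρ ad_X (Φ z) + ρ Φ (ad*_z X) + ρ² Φ (ad*_z z)`, while
`U' = ρ (ad_X (Φ z) + Φ z')`. For the rotating vector `z = cos(σ+λt) v - sin(σ+λt) w` the
hypotheses give exactly `z' = -ad*_z X` and `ad*_z z = 0`.
-/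

open scoped RealInnerProductSpace

variable {g : Type*} [NormedAddCommGroup g] [InnerProductSpace ℝ g] [FiniteDimensional ℝ g]

open NormedSpace

section LinearODE

variable {𝕂 E : Type*} [RCLike 𝕂] [NormedAddCommGroup E] [NormedSpace 𝕂 E] [CompleteSpace E]
  {A : E →L[𝕂] E}

theorem exp_smul_apply_eq_of_hasDerivAt {F : 𝕂 → E} (hF : ∀ s, HasDerivAt F (A (F s)) s)
    (t : 𝕂) : exp (t • A) (F 0) = F t := by
  have hk : ∀ s, HasDerivAt (fun s => exp ((t - s) • A) (F s)) 0 s := by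
    intro s
    have hexp : HasDerivAt (fun s : 𝕂 => exp ((t - s) • A))
        ((-1 : 𝕂) • (A * exp ((t - s) • A))) s :=
      (hasDerivAt_exp_smul_const' A (t - s)).scomp s ((hasDerivAt_id s).const_sub t)
    convert hexp.clm_apply (hF s) using 1
    have hcomm : A * exp ((t - s) • A) = exp ((t - s) • A) * A :=
      ((Commute.refl A).smul_right (t - s)).exp_right.eq
    simp [hcomm]
  simpa using
    is_const_of_deriv_eq_zero (fun s => (hk s).differentiableAt) (fun s => (hk s).deriv) 0 t

theorem exp_smul_apply_of_apply_eq_zero {x : E} (hx : A x = 0) (t : 𝕂) : exp (t • A) x = x :=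
  exp_smul_apply_eq_of_hasDerivAt (F := fun _ => x)
    (fun s => by simpa [hx] using hasDerivAt_const s x) t

theorem exp_smul_bilinear_apply_of_leibniz {B : E →L[𝕂] E →L[𝕂] E}
    (hA : ∀ x y, A (B x y) = B (A x) y + B x (A y)) (t : 𝕂) (x y : E) :
    exp (t • A) (B x y) = B (exp (t • A) x) (exp (t • A) y) := by
  have hx := fun s : 𝕂 => (hasDerivAt_exp_smul_const' A s).clm_apply (hasDerivAt_const s x)
  have hy := fun s : 𝕂 => (hasDerivAt_exp_smul_const' A s).clm_apply (hasDerivAt_const s y)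
  convert exp_smul_apply_eq_of_hasDerivAt
    (F := fun s => B (exp (s • A) x) (exp (s • A) y)) (fun s => ?_) t using 2
  · simp
  · convert B.hasDerivAt_of_bilinear (fun _ => hx s) (fun _ => hy s) using 1
    simp [hA, add_comm]

end LinearODE

theorem exp_smul_mem_unitary {E : Type*} [NormedAddCommGroup E] [InnerProductSpace ℝ E]
    [CompleteSpace E] {A : E →L[ℝ] E} (hA : ContinuousLinearMap.adjoint A = -A) (t : ℝ) :
    exp (t • A) ∈ unitary (E →L[ℝ] E) := by
  -- `exp` does not depend on this choice; `E →L[ℝ] E` has no `ℚ`-algebra instance of its own.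
  have : NormedAlgebra ℚ (E →L[ℝ] E) := NormedAlgebra.restrictScalars ℚ ℝ _
  refine exp_mem_unitary_of_mem_skewAdjoint (skewAdjoint.mem_iff.mpr ?_)
  rw [star_smul, ContinuousLinearMap.star_eq_adjoint, hA, star_trivial, smul_neg]

section Bracket

variable {L : Type*} [AddCommGroup L] [Module ℝ L] (br : L →ₗ[ℝ] L →ₗ[ℝ] L)

theorem br_self_eq_zero (hanti : ∀ x y : L, br x y = -br y x) (x : L) : br x x = 0 := by
  have := hanti x x
  rwa [eq_neg_iff_add_eq_zero, ← two_smul ℝ, smul_eq_zero, or_iff_right two_ne_zero] at this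

theorem br_leibniz (hanti : ∀ x y : L, br x y = -br y x)
    (hjacobi : ∀ x y z : L, br (br x y) z + br (br y z) x + br (br z x) y = 0) (a x y : L) :
    br a (br x y) = br (br a x) y + br x (br a y) := by
  have := hjacobi x y a
  rw [hanti (br x y), hanti (br y a), hanti y a] at this
  simp only [map_neg, neg_neg] at this
  linear_combination (norm := abel) -this

end Bracket

theorem hasDerivAt_cos_smul_sub_sin_smul {E : Type*} [NormedAddCommGroup E] [NormedSpace ℝ E]
    (v w : E) (a b t : ℝ) :
    HasDerivAt (fun s => Real.cos (a + b * s) • v - Real.sin (a + b * s) • w)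
      (-(b • (Real.cos (a + b * t) • w + Real.sin (a + b * t) • v))) t := by
  have hθ : HasDerivAt (fun s => a + b * s) b t := by
    simpa using ((hasDerivAt_id t).const_mul b).const_add a
  refine ((hθ.cos.smul_const v).sub (hθ.sin.smul_const w)).congr_deriv ?_
  module

section Coadjoint

open ContinuousLinearMap

variable (br : g →ₗ[ℝ] g →ₗ[ℝ] g)

theorem adStarOp_add (a b : g) : adStarOp br (a + b) = adStarOp br a + adStarOp br b := by
  simp [adStarOp, adOp, map_add]

theorem adStarOp_sub (a b : g) : adStarOp br (a - b) = adStarOp br a - adStarOp br b := by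
  simp [adStarOp, adOp, map_sub]

theorem adStarOp_smul (c : ℝ) (a : g) : adStarOp br (c • a) = c • adStarOp br a := by
  simp [adStarOp, adOp]

noncomputable def brCLM : g →L[ℝ] g →L[ℝ] g :=
  LinearMap.toContinuousLinearMap (LinearMap.toContinuousLinearMap.toLinearMap ∘ₗ br)

variable {br}

theorem adOp_phiExp_comp (hanti : ∀ x y : g, br x y = -br y x)
    (hjacobi : ∀ x y z : g, br (br x y) z + br (br y z) x + br (br z x) y = 0)
    (X : g) (t : ℝ) (z : g) :
    adOp br (phiExp br X t z) ∘L phiExp br X t = phiExp br X t ∘L adOp br z := by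
  ext y
  exact (exp_smul_bilinear_apply_of_leibniz (B := brCLM br)
    (br_leibniz br hanti hjacobi X) t z y).symm

theorem adStarOp_phiExp_apply_phiExp (hanti : ∀ x y : g, br x y = -br y x)
    (hjacobi : ∀ x y z : g, br (br x y) z + br (br y z) x + br (br z x) y = 0)
    (X : g) (hX : adStarOp br X = -adOp br X) (t : ℝ) (z y : g) :
    adStarOp br (phiExp br X t z) (phiExp br X t y) = phiExp br X t (adStarOp br z y) := by
  set Φ := phiExp br X t
  have hΦ : Φ ∈ unitary (g →L[ℝ] g) := exp_smul_mem_unitary hX t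
  have hΦ₁ : adjoint Φ ∘L Φ = .id ℝ g := by
    simpa [star_eq_adjoint, mul_def, one_def] using Unitary.star_mul_self_of_mem hΦ
  have hΦ₂ : Φ ∘L adjoint Φ = .id ℝ g := by
    simpa [star_eq_adjoint, mul_def, one_def] using Unitary.mul_star_self_of_mem hΦ
  have had : adjoint Φ ∘L adOp br (Φ z) ∘L Φ = adOp br z := by
    rw [adOp_phiExp_comp hanti hjacobi, ← comp_assoc, hΦ₁, id_comp]
  have hcoad : adjoint Φ ∘L adStarOp br (Φ z) ∘L Φ = adStarOp br z := by
    rw [adStarOp, adStarOp, ← had, adjoint_comp, adjoint_comp, adjoint_adjoint, comp_assoc]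
  calc adStarOp br (Φ z) (Φ y) = (Φ ∘L adjoint Φ) (adStarOp br (Φ z) (Φ y)) := by rw [hΦ₂]; rfl
    _ = Φ (adStarOp br z y) := by rw [← hcoad]; rfl

theorem adStarOp_smul_sub_smul_apply {X v w : g} {lam : ℝ} (h1 : adStarOp br v X = lam • w)
    (h2 : adStarOp br w X = -(lam • v)) (c s : ℝ) :
    adStarOp br (c • v - s • w) X = lam • (c • w + s • v) := by
  rw [adStarOp_sub, adStarOp_smul, adStarOp_smul]
  simp only [sub_apply, smul_apply, h1, h2]
  module

theorem adStarOp_smul_sub_smul_self {v w : g} (h3 : adStarOp br v v = 0)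
    (h4 : adStarOp br w w = 0) (h5 : adStarOp br v w + adStarOp br w v = 0) (c s : ℝ) :
    adStarOp br (c • v - s • w) (c • v - s • w) = 0 := by
  rw [adStarOp_sub, adStarOp_smul, adStarOp_smul]
  simp only [sub_apply, smul_apply, map_sub, map_smul, h3, h4, eq_neg_of_add_eq_zero_right h5]
  module

theorem hasDerivAt_add_smul_phiExp (hanti : ∀ x y : g, br x y = -br y x)
    (hjacobi : ∀ x y z : g, br (br x y) z + br (br y z) x + br (br z x) y = 0)
    (X : g) (hX : adStarOp br X = -adOp br X) {z : ℝ → g} {t : ℝ}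
    (hz : HasDerivAt z (-adStarOp br (z t) X) t) (hzz : adStarOp br (z t) (z t) = 0) (ρ : ℝ) :
    HasDerivAt (fun s => X + ρ • phiExp br X s (z s))
      (-adStarOp br (X + ρ • phiExp br X t (z t)) (X + ρ • phiExp br X t (z t))) t := by
  set Φ := phiExp br X t
  have hXX : adOp br X X = 0 := br_self_eq_zero br hanti X
  have hΦX : Φ X = X := exp_smul_apply_of_apply_eq_zero hXX t
  have hcurve : HasDerivAt (fun s => phiExp br X s (z s))
      (adOp br X (Φ (z t)) - Φ (adStarOp br (z t) X)) t := by
    refine ((hasDerivAt_exp_smul_const' (adOp br X) t).clm_apply hz).congr_deriv ?_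
    rw [map_neg, ← sub_eq_add_neg]
    rfl
  have hcoad : adStarOp br (Φ (z t)) X = Φ (adStarOp br (z t) X) := by
    conv_lhs => rw [← hΦX]
    exact adStarOp_phiExp_apply_phiExp hanti hjacobi X hX t _ _
  have hself : adStarOp br (Φ (z t)) (Φ (z t)) = 0 := by
    rw [adStarOp_phiExp_apply_phiExp hanti hjacobi X hX, hzz, map_zero]
  refine ((hcurve.const_smul ρ).const_add X).congr_deriv ?_
  rw [adStarOp_add, adStarOp_smul, hX]
  simp only [add_apply, smul_apply, neg_apply, map_add, map_smul, hXX, hcoad, hself]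
  module

end Coadjoint

/-- Theorem 5.6 in the finite-dimensional real Lie algebra
setting (the Lie algebra is a finite-dimensional real inner product space `g`
with an antisymmetric bilinear bracket `br` satisfying the Jacobi identity).
If `ad*_X = -ad_X`, `ad*_v X = λ w`, `ad*_w X = -λ v`, `ad*_v v = 0`,
`ad*_w w = 0` and `ad*_v w + ad*_w v = 0`, then
`U(t) = X + ρ Φ(t)(cos(σ+λt) v - sin(σ+λt) w)` solves the Euler–Arnold
equation `U' = -ad*_U U`. -/
theorem statement16 (br : g →ₗ[ℝ] g →ₗ[ℝ] g)
    (hanti : ∀ x y : g, br x y = -br y x)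
    (hjacobi : ∀ x y z : g, br (br x y) z + br (br y z) x + br (br z x) y = 0)
    (X : g) (hX : adStarOp br X = -adOp br X)
    (v w : g) (lam sig rho : ℝ)
    (h1 : adStarOp br v X = lam • w)
    (h2 : adStarOp br w X = -(lam • v))
    (h3 : adStarOp br v v = 0)
    (h4 : adStarOp br w w = 0)
    (h5 : adStarOp br v w + adStarOp br w v = 0) :
    ∀ t : ℝ,
      HasDerivAt
        (fun s : ℝ => X + rho •
          phiExp br X s (Real.cos (sig + lam * s) • v - Real.sin (sig + lam * s) • w))
        (-(adStarOp br
            (X + rho •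
              phiExp br X t (Real.cos (sig + lam * t) • v - Real.sin (sig + lam * t) • w))
            (X + rho •
              phiExp br X t (Real.cos (sig + lam * t) • v - Real.sin (sig + lam * t) • w)))) t := by
  intro t
  have hz := hasDerivAt_cos_smul_sub_sin_smul v w sig lam t
  rw [← adStarOp_smul_sub_smul_apply h1 h2] at hz
  exact hasDerivAt_add_smul_phiExp hanti hjacobi X hX hz
    (adStarOp_smul_sub_smul_self h3 h4 h5 _ _) rho
end

section
/- Let g be a finite-dimensional real Lie algebra equipped with an inner product ⟨·,·⟩; for u ∈ g let ad_u : g → g denote v ↦ ⁅u,v⁆ and ad*_u its adjoint with respect to ⟨·,·⟩. Let X ∈ g satisfy ad*_X = −ad_X and let Φ(t) := exp(t·ad_X). Let v, w ∈ g and λ, σ, ρ ∈ ℝ with ρ ≠ 0 and λ ≠ 0, and define U(t) := X + ρ·Φ(t)(cos(σ+λt)·v − sin(σ+λt)·w). Then U is constant in t (U'(t) = 0 for all t) if and only if ad*_X v = −λ·w and ad*_X w = λ·v. -/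
/-!
Write `V(t) = cos(σ+λt) v - sin(σ+λt) w`. Since `d/dt Φ(t) = Φ(t) ad_X`, the derivative of `U` is
`ρ Φ(t) (ad_X V(t) + V'(t))`, and `ad_X V + V'` is again a curve of the same shape, with coefficients
`ad_X v - λ w` and `ad_X w + λ v`. As `ρ ≠ 0` and `Φ(t)` is invertible, `U' ≡ 0` exactly when this
curve vanishes identically, i.e. (as `λ ≠ 0`, look at the times where the angle is `0` and `π/2`)
when both coefficients vanish; `ad*_X = -ad_X` turns this into the two stated equations.
-/

open scoped RealInnerProductSpace

variable {g : Type*} [NormedAddCommGroup g] [InnerProductSpace ℝ g] [FiniteDimensional ℝ g]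

section RotatingCurve

variable {E F : Type*} [AddCommGroup E] [Module ℝ E] [AddCommGroup F] [Module ℝ F]

/-- The rotating-frame solution of Theorem 5.1 is `V(t) = ρ • rotCurve σ λ v w t`. -/
noncomputable def rotCurve (sig lam : ℝ) (v w : E) (t : ℝ) : E :=
  Real.cos (sig + lam * t) • v - Real.sin (sig + lam * t) • w

lemma rotCurve_add (sig lam : ℝ) (v w v' w' : E) (t : ℝ) :
    rotCurve sig lam v w t + rotCurve sig lam v' w' t = rotCurve sig lam (v + v') (w + w') t := by
  simp only [rotCurve, smul_add]
  abel

lemma map_rotCurve {M : Type*} [FunLike M E F] [LinearMapClass M ℝ E F] (f : M)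
    (sig lam : ℝ) (v w : E) (t : ℝ) :
    f (rotCurve sig lam v w t) = rotCurve sig lam (f v) (f w) t := by
  simp only [rotCurve, map_sub, map_smul]

lemma rotCurve_eq_zero_iff {sig lam : ℝ} (hlam : lam ≠ 0) {v w : E} :
    (∀ t, rotCurve sig lam v w t = 0) ↔ v = 0 ∧ w = 0 := by
  refine ⟨fun h => ⟨?_, ?_⟩, fun ⟨hv, hw⟩ t => by simp [rotCurve, hv, hw]⟩
  · simpa [rotCurve, mul_div_cancel₀ _ hlam] using h (-sig / lam)
  · simpa [rotCurve, mul_div_cancel₀ _ hlam] using h ((Real.pi / 2 - sig) / lam)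

end RotatingCurve

section Derivatives

variable {E : Type*} [NormedAddCommGroup E] [NormedSpace ℝ E]

lemma hasDerivAt_rotCurve (sig lam : ℝ) (v w : E) (t : ℝ) :
    HasDerivAt (rotCurve sig lam v w) (rotCurve sig lam (-(lam • w)) (lam • v) t) t := by
  have hθ : HasDerivAt (fun s : ℝ => sig + lam * s) lam t := by
    simpa using ((hasDerivAt_id t).const_mul lam).const_add sig
  convert (((Real.hasDerivAt_cos _).comp t hθ).smul_const v).sub
    (((Real.hasDerivAt_sin _).comp t hθ).smul_const w) using 1
  · rfl
  simp only [rotCurve, smul_neg, smul_smul]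
  module

variable [CompleteSpace E]

lemma HasDerivAt.exp_smul_apply {A : E →L[ℝ] E} {c : ℝ → E} {c' : E} {t : ℝ}
    (hc : HasDerivAt c c' t) :
    HasDerivAt (fun s => NormedSpace.exp (s • A) (c s))
      (NormedSpace.exp (t • A) (A (c t) + c')) t := by
  convert (hasDerivAt_exp_smul_const A t).clm_apply hc using 1
  rw [map_add]
  rfl

lemma exp_smul_injective (A : E →L[ℝ] E) (t : ℝ) :
    Function.Injective (NormedSpace.exp (t • A) : E →L[ℝ] E) :=
  (ContinuousLinearMap.isUnit_iff_bijective.mp (NormedSpace.isUnit_exp_of_mem_ball (𝕂 := ℝ)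
    (by simp [NormedSpace.expSeries_radius_eq_top]))).injective

end Derivatives

theorem statement17_general (br : g →ₗ[ℝ] g →ₗ[ℝ] g)
    (X : g) (hX : adStarOp br X = -adOp br X)
    (v w : g) (lam sig rho : ℝ) (hrho : rho ≠ 0) (hlam : lam ≠ 0) :
    (∀ t : ℝ,
      HasDerivAt
        (fun s : ℝ => X + rho •
          phiExp br X s (Real.cos (sig + lam * s) • v - Real.sin (sig + lam * s) • w))
        0 t)
      ↔ (adStarOp br X v = -(lam • w) ∧ adStarOp br X w = lam • v) := by
  set A := adOp br X
  have hU (t : ℝ) : HasDerivAt (fun s => X + rho • phiExp br X s (rotCurve sig lam v w s))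
      (rho • phiExp br X t (rotCurve sig lam (A v + -(lam • w)) (A w + lam • v) t)) t := by
    rw [← rotCurve_add, ← map_rotCurve]
    exact ((hasDerivAt_rotCurve sig lam v w t).exp_smul_apply.const_smul rho).const_add X
  have hcoadj (u : g) : adStarOp br X u = -A u := by rw [hX]; rfl
  calc (∀ t, HasDerivAt (fun s => X + rho • phiExp br X s (rotCurve sig lam v w s)) 0 t)
      ↔ ∀ t, rotCurve sig lam (A v + -(lam • w)) (A w + lam • v) t = 0 := by
        refine forall_congr' fun t => ⟨fun h => ?_, fun h => by simpa [h] using hU t⟩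
        have := (hU t).unique h
        rw [smul_eq_zero, or_iff_right hrho, ← map_zero (phiExp br X t)] at this
        exact exp_smul_injective A t this
    _ ↔ A v + -(lam • w) = 0 ∧ A w + lam • v = 0 := rotCurve_eq_zero_iff hlam
    _ ↔ adStarOp br X v = -(lam • w) ∧ adStarOp br X w = lam • v := by
        rw [hcoadj, hcoadj, neg_inj, add_neg_eq_zero, neg_eq_iff_add_eq_zero]

/-- The stationarity criterion of Theorem 5.6 in the
finite-dimensional real Lie algebra setting (the Lie algebra is a
finite-dimensional real inner product space `g` with an antisymmetric bilinear
bracket `br` satisfying the Jacobi identity). With `ad*_X = -ad_X`, `ρ ≠ 0`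
and `λ ≠ 0`, the curve `U(t) = X + ρ Φ(t)(cos(σ+λt) v - sin(σ+λt) w)` is
constant in `t` if and only if `ad*_X v = -λ w` and `ad*_X w = λ v`. -/
theorem statement17 (br : g →ₗ[ℝ] g →ₗ[ℝ] g)
    (hanti : ∀ x y : g, br x y = -br y x)
    (hjacobi : ∀ x y z : g, br (br x y) z + br (br y z) x + br (br z x) y = 0)
    (X : g) (hX : adStarOp br X = -adOp br X)
    (v w : g) (lam sig rho : ℝ) (hrho : rho ≠ 0) (hlam : lam ≠ 0) :
    (∀ t : ℝ,
      HasDerivAt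
        (fun s : ℝ => X + rho •
          phiExp br X s (Real.cos (sig + lam * s) • v - Real.sin (sig + lam * s) • w))
        0 t)
      ↔ (adStarOp br X v = -(lam • w) ∧ adStarOp br X w = lam • v) :=
  statement17_general br X hX v w lam sig rho hrho hlam
end
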